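/- Let k ≥ 1 and let Γ be a 2k × 3 tableau with entries in {1,…,6}, strictly increasing rows, non-decreasing columns, and each value appearing exactly k times. If the first row of Γ is (1,3,4), then the last row of Γ is (2,5,6). If the first row is (1,2,5), then the last row is (3,4,6). -/
import Mathlib

private def Fc (k : ℕ) (Γ : Fin (2 * k) → Fin 3 → ℕ) (t : ℕ) : Finset (Fin (2 * k) × Fin 3) :=
  Finset.univ.filter fun p => Γ p.1 p.2 = t

private lemma mem_Fc {k : ℕ} {Γ : Fin (2 * k) → Fin 3 → ℕ} {t : ℕ}
    {p : Fin (2 * k) × Fin 3} : p ∈ Fc k Γ t ↔ Γ p.1 p.2 = t := by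
  simp [Fc]

private def Colc (k : ℕ) (j : Fin 3) : Finset (Fin (2 * k) × Fin 3) :=
  Finset.univ.filter fun p => p.2 = j

private lemma mem_Colc {k : ℕ} {j : Fin 3} {p : Fin (2 * k) × Fin 3} :
    p ∈ Colc k j ↔ p.2 = j := by simp [Colc]

private lemma card_Colc {k : ℕ} (j : Fin 3) : (Colc k j).card = 2 * k := by
  have h : Colc k j = Finset.univ ×ˢ {j} := by
    ext ⟨a, b⟩; simp [Colc, Finset.mem_product, eq_comm]
  rw [h, Finset.card_product]; simp

private lemma disj_Fc {k : ℕ} {Γ : Fin (2 * k) → Fin 3 → ℕ} {t t' : ℕ} (h : t ≠ t') :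
    Disjoint (Fc k Γ t) (Fc k Γ t') := by
  rw [Finset.disjoint_left]
  intro p h1 h2
  rw [mem_Fc] at h1 h2
  omega

/-- For a `2k × 3` tableau with entries in `{1,…,6}`, strictly increasing rows,
non-decreasing columns, and each value appearing exactly `k` times: if the
first row is `(1,3,4)` then the last row is `(2,5,6)`, and if the first row is
`(1,2,5)` then the last row is `(3,4,6)`. -/
theorem g36_last_row_cases (k : ℕ) (hk : 1 ≤ k) (Γ : Fin (2 * k) → Fin 3 → ℕ)
    (hval : ∀ i j, 1 ≤ Γ i j ∧ Γ i j ≤ 6)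
    (hrow : ∀ i, ∀ j j' : Fin 3, j < j' → Γ i j < Γ i j')
    (hcol : ∀ i i' : Fin (2 * k), i ≤ i' → ∀ j, Γ i j ≤ Γ i' j)
    (hcount : ∀ t : ℕ, 1 ≤ t → t ≤ 6 →
      (Finset.univ.filter fun p : Fin (2 * k) × Fin 3 => Γ p.1 p.2 = t).card = k) :
    ((Γ ⟨0, by omega⟩ 0, Γ ⟨0, by omega⟩ 1, Γ ⟨0, by omega⟩ 2) = (1, 3, 4) →
      (Γ ⟨2 * k - 1, by omega⟩ 0, Γ ⟨2 * k - 1, by omega⟩ 1, Γ ⟨2 * k - 1, by omega⟩ 2)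
        = (2, 5, 6)) ∧
    ((Γ ⟨0, by omega⟩ 0, Γ ⟨0, by omega⟩ 1, Γ ⟨0, by omega⟩ 2) = (1, 2, 5) →
      (Γ ⟨2 * k - 1, by omega⟩ 0, Γ ⟨2 * k - 1, by omega⟩ 1, Γ ⟨2 * k - 1, by omega⟩ 2)
        = (3, 4, 6)) := by
  have hFc : ∀ t, 1 ≤ t → t ≤ 6 → (Fc k Γ t).card = k := fun t h1 h2 => hcount t h1 h2
  set z : Fin (2 * k) := ⟨0, by omega⟩ with hzdef
  set l : Fin (2 * k) := ⟨2 * k - 1, by omega⟩ with hldef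
  have hle_z : ∀ i : Fin (2 * k), z ≤ i := fun i => Fin.le_def.mpr (Nat.zero_le _)
  have hle_l : ∀ i : Fin (2 * k), i ≤ l := fun i => Fin.le_def.mpr (by
    have h := i.isLt
    show i.1 ≤ 2 * k - 1
    omega)
  have h2last : ∀ q : Fin 3, q ≤ 2 := fun q => Fin.le_def.mpr (by
    have h := q.isLt
    show q.1 ≤ 2
    omega)
  have hrow_le : ∀ i, ∀ j j' : Fin 3, j ≤ j' → Γ i j ≤ Γ i j' := by
    intro i j j' h
    rcases lt_or_eq_of_le h with h | h
    · exact (hrow i j j' h).le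
    · rw [h]
  -- the last entry of the last row is 6
  have hne6 : (Fc k Γ 6).Nonempty := by
    rw [← Finset.card_pos, hFc 6 (by norm_num) le_rfl]; omega
  obtain ⟨p6, hp6⟩ := hne6
  rw [mem_Fc] at hp6
  have h6 : Γ l 2 = 6 := by
    have h1 : Γ p6.1 p6.2 ≤ Γ p6.1 2 := hrow_le _ _ _ (h2last p6.2)
    have h2 : Γ p6.1 2 ≤ Γ l 2 := hcol _ _ (hle_l _) 2
    have h3 := (hval l 2).2
    omega
  constructor
  · -- Case A : first row (1,3,4)
    intro hA
    rw [Prod.mk.injEq, Prod.mk.injEq] at hA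
    obtain ⟨hA0, hA1, hA2⟩ := hA
    have hc1 : ∀ i, 3 ≤ Γ i 1 := fun i => by
      have h := hcol z i (hle_z i) 1; omega
    have hc2 : ∀ i, 4 ≤ Γ i 2 := fun i => by
      have h := hrow i 1 2 (by decide); have := hc1 i; omega
    -- middle entry of last row is 5
    have hL1 : Γ l 1 = 5 := by
      by_contra hne
      have hb : Γ l 1 ≤ 4 := by
        have h1 := hrow l 1 2 (by decide); have h2 := (hval l 2).2; omega
      have hsub : insert (z, (2 : Fin 3)) (Fc k Γ 5 ∪ Fc k Γ 6) ⊆ Colc k 2 := by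
        intro p hp
        rw [Finset.mem_insert, Finset.mem_union, mem_Fc, mem_Fc] at hp
        rw [mem_Colc]
        rcases hp with hp | hp | hp
        · rw [hp]
        · obtain ⟨i, j⟩ := p
          have hj : j = 2 := by
            fin_cases j
            · exfalso
              have h' : Γ i 0 = 5 := hp
              have h1 := hrow i 0 1 (by decide)
              have h2 := hcol i l (hle_l i) 1
              omega
            · exfalso
              have h' : Γ i 1 = 5 := hp
              have h2 := hcol i l (hle_l i) 1
              omega
            · rfl
          exact hj
        · obtain ⟨i, j⟩ := p
          have hj : j = 2 := by
            fin_cases j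
            · exfalso
              have h' : Γ i 0 = 6 := hp
              have h1 := hrow i 0 1 (by decide)
              have h2 := hcol i l (hle_l i) 1
              omega
            · exfalso
              have h' : Γ i 1 = 6 := hp
              have h2 := hcol i l (hle_l i) 1
              omega
            · rfl
          exact hj
      have hnm : (z, (2 : Fin 3)) ∉ Fc k Γ 5 ∪ Fc k Γ 6 := by
        rw [Finset.mem_union, mem_Fc, mem_Fc]
        have h' : Γ z 2 = 4 := hA2
        push_neg
        constructor <;> (show ¬ (Γ z 2 = _); omega)
      have hcard := Finset.card_le_card hsub
      rw [Finset.card_insert_of_notMem hnm,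
          Finset.card_union_of_disjoint (disj_Fc (by omega)),
          hFc 5 (by norm_num) (by norm_num), hFc 6 (by norm_num) (by norm_num),
          card_Colc] at hcard
      omega
    -- first entry of last row is 2
    have hsub0 : Fc k Γ 1 ∪ Fc k Γ 2 ⊆ Colc k 0 := by
      intro p hp
      rw [Finset.mem_union, mem_Fc, mem_Fc] at hp
      rw [mem_Colc]
      obtain ⟨i, j⟩ := p
      have hj : j = 0 := by
        fin_cases j
        · rfl
        · exfalso
          have h' : Γ i 1 = 1 ∨ Γ i 1 = 2 := hp
          have := hc1 i
          omega
        · exfalso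
          have h' : Γ i 2 = 1 ∨ Γ i 2 = 2 := hp
          have := hc2 i
          omega
      exact hj
    have heq0 : Fc k Γ 1 ∪ Fc k Γ 2 = Colc k 0 :=
      Finset.eq_of_subset_of_card_le hsub0 (by
        rw [card_Colc, Finset.card_union_of_disjoint (disj_Fc (by omega)),
            hFc 1 (by norm_num) (by norm_num), hFc 2 (by norm_num) (by norm_num)]
        omega)
    have hl0mem : (l, (0 : Fin 3)) ∈ Fc k Γ 1 ∪ Fc k Γ 2 := by
      rw [heq0, mem_Colc]
    have hl0le : Γ l 0 ≤ 2 := by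
      rw [Finset.mem_union, mem_Fc, mem_Fc] at hl0mem
      have h' : Γ l 0 = 1 ∨ Γ l 0 = 2 := hl0mem
      omega
    have hne2 : (Fc k Γ 2).Nonempty := by
      rw [← Finset.card_pos, hFc 2 (by norm_num) (by norm_num)]; omega
    obtain ⟨p2, hp2⟩ := hne2
    have hp2c : p2.2 = 0 := by
      have h := hsub0 (Finset.mem_union_right _ hp2)
      rwa [mem_Colc] at h
    rw [mem_Fc, hp2c] at hp2
    have hmon : Γ p2.1 0 ≤ Γ l 0 := hcol _ _ (hle_l _) 0
    have hL0 : Γ l 0 = 2 := by omega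
    rw [Prod.mk.injEq, Prod.mk.injEq]
    exact ⟨hL0, hL1, h6⟩
  · -- Case B : first row (1,2,5)
    intro hB
    rw [Prod.mk.injEq, Prod.mk.injEq] at hB
    obtain ⟨hB0, hB1, hB2⟩ := hB
    have hc2 : ∀ i, 5 ≤ Γ i 2 := fun i => by
      have h := hcol z i (hle_z i) 2; omega
    have hsubB : Colc k 2 ⊆ Fc k Γ 5 ∪ Fc k Γ 6 := by
      intro p hp
      rw [mem_Colc] at hp
      rw [Finset.mem_union, mem_Fc, mem_Fc, hp]
      have h1 := hc2 p.1
      have h2 := (hval p.1 2).2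
      omega
    have heqB : Colc k 2 = Fc k Γ 5 ∪ Fc k Γ 6 :=
      Finset.eq_of_subset_of_card_le hsubB (by
        rw [card_Colc, Finset.card_union_of_disjoint (disj_Fc (by omega)),
            hFc 5 (by norm_num) (by norm_num), hFc 6 (by norm_num) (by norm_num)]
        omega)
    have h5col : ∀ p : Fin (2 * k) × Fin 3, Γ p.1 p.2 = 5 → p.2 = 2 := by
      intro p hp
      have h : p ∈ Colc k 2 := by
        rw [heqB]
        exact Finset.mem_union_left _ (mem_Fc.mpr hp)
      rwa [mem_Colc] at h
    -- middle entry of the last row is 4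
    have hL1le : Γ l 1 ≤ 4 := by
      have h1 := hrow l 1 2 (by decide)
      have h2 := (hval l 2).2
      by_contra h
      have h5 : Γ l 1 = 5 := by omega
      have hcol5 : (1 : Fin 3) = 2 := h5col (l, 1) h5
      exact absurd hcol5 (by decide)
    have hne4 : (Fc k Γ 4).Nonempty := by
      rw [← Finset.card_pos, hFc 4 (by norm_num) (by norm_num)]; omega
    obtain ⟨⟨i4, j4⟩, hp4⟩ := hne4
    rw [mem_Fc] at hp4
    have hp4' : Γ i4 j4 = 4 := hp4
    have hj4 : j4 = 1 := by
      fin_cases j4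
      · exfalso
        have h0 : Γ i4 0 = 4 := hp4'
        have h1 := hrow i4 0 1 (by decide)
        have h1' := hrow i4 1 2 (by decide)
        have h2 := (hval i4 2).2
        have h5 : Γ i4 1 = 5 := by omega
        have hcol5 : (1 : Fin 3) = 2 := h5col (i4, 1) h5
        exact absurd hcol5 (by decide)
      · rfl
      · exfalso
        have h0 : Γ i4 2 = 4 := hp4'
        have := hc2 i4
        omega
    rw [hj4] at hp4'
    have hL1 : Γ l 1 = 4 := by
      have h := hcol i4 l (hle_l _) 1
      omega
    -- first entry of the last row is 3
    have hc1le : ∀ i, Γ i 1 ≤ 4 := fun i => by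
      have h := hcol i l (hle_l i) 1; omega
    have hL0 : Γ l 0 = 3 := by
      have hlt := hrow l 0 1 (by decide)
      by_contra h
      have hall : ∀ i, Γ i 0 ≤ 2 := fun i => by
        have h1 := hcol i l (hle_l i) 0; omega
      have hsub : insert (z, (1 : Fin 3)) (Fc k Γ 3 ∪ Fc k Γ 4) ⊆ Colc k 1 := by
        intro p hp
        rw [Finset.mem_insert, Finset.mem_union, mem_Fc, mem_Fc] at hp
        rw [mem_Colc]
        rcases hp with hp | hp | hp
        · rw [hp]
        · obtain ⟨i, j⟩ := p
          have hj : j = 1 := by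
            fin_cases j
            · exfalso
              have h' : Γ i 0 = 3 := hp
              have := hall i
              omega
            · rfl
            · exfalso
              have h' : Γ i 2 = 3 := hp
              have := hc2 i
              omega
          exact hj
        · obtain ⟨i, j⟩ := p
          have hj : j = 1 := by
            fin_cases j
            · exfalso
              have h' : Γ i 0 = 4 := hp
              have := hall i
              omega
            · rfl
            · exfalso
              have h' : Γ i 2 = 4 := hp
              have := hc2 i
              omega
          exact hj
      have hnm : (z, (1 : Fin 3)) ∉ Fc k Γ 3 ∪ Fc k Γ 4 := by
        rw [Finset.mem_union, mem_Fc, mem_Fc]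
        have h' : Γ z 1 = 2 := hB1
        push_neg
        constructor <;> (show ¬ (Γ z 1 = _); omega)
      have hcard := Finset.card_le_card hsub
      rw [Finset.card_insert_of_notMem hnm,
          Finset.card_union_of_disjoint (disj_Fc (by omega)),
          hFc 3 (by norm_num) (by norm_num), hFc 4 (by norm_num) (by norm_num),
          card_Colc] at hcard
      omega
    rw [Prod.mk.injEq, Prod.mk.injEq]
    exact ⟨hL0, hL1, h6⟩
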